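/- With Q(x) = ∫_{−∞}^{x} f_δ(v) dv for the piecewise step function f_δ, one has Q(x) ≥ (δ/4)·H(x) for all x, where H is the Heaviside step function with H(0)=1. Consequently, for disjoint finite sets P, N and scores x_{ij}, the surrogate loss l = (1/|P|) Σ_{i∈P} [Σ_{j∈N} Q(x_{ij})] / (1 + Σ_{j∈P∪N, j≠i} H(x_{ij})) satisfies l ≥ (δ/4)·L_AP, where L_AP = (1/|P|) Σ_{i∈P} [Σ_{j∈N} H(x_{ij})] / (1 + Σ_{j∈P∪N, j≠i} H(x_{ij})). -/
import Mathlib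


open MeasureTheory

/-- Heaviside step function: `H x = 1` for `x ≥ 0`, `0` otherwise. -/
noncomputable def Hstep (x : ℝ) : ℝ := if 0 ≤ x then 1 else 0

/-- Piecewise step function with parameter `δ`. -/
noncomputable def pstep (δ x : ℝ) : ℝ :=
  if x < -δ then 0 else if x ≤ δ then x / (2 * δ) + 1 / 2 else 1

lemma pstep_nonneg {δ : ℝ} (hδ : 0 < δ) (v : ℝ) : 0 ≤ pstep δ v := by
  unfold pstep
  split_ifs with h1 h2
  · exact le_rfl
  · push_neg at h1
    have h2δ : (0:ℝ) < 2 * δ := by linarith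
    have : (-1:ℝ)/2 ≤ v / (2*δ) := by rw [le_div_iff₀ h2δ]; linarith
    linarith
  · norm_num

lemma pstep_le_one {δ : ℝ} (hδ : 0 < δ) (v : ℝ) : pstep δ v ≤ 1 := by
  unfold pstep
  split_ifs with h1 h2
  · norm_num
  · have h2δ : (0:ℝ) < 2 * δ := by linarith
    have : v / (2*δ) ≤ 1/2 := by rw [div_le_iff₀ h2δ]; linarith
    linarith
  · exact le_rfl

lemma pstep_eq_zero {δ : ℝ} (hδ : 0 < δ) {v : ℝ} (hv : v ≤ -δ) : pstep δ v = 0 := by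
  unfold pstep
  rcases lt_or_eq_of_le hv with h | h
  · simp [h]
  · rw [h]; simp [show -δ ≤ δ by linarith]; field_simp; ring

lemma pstep_measurable (δ : ℝ) : Measurable (pstep δ) := by
  unfold pstep
  exact Measurable.ite (measurableSet_lt measurable_id measurable_const) measurable_const
    (Measurable.ite (measurableSet_le measurable_id measurable_const)
      ((measurable_id.div_const _).add_const _) measurable_const)

lemma pstep_integrableOn_Iic {δ : ℝ} (hδ : 0 < δ) (t : ℝ) :
    IntegrableOn (pstep δ) (Set.Iic t) := by
  rcases le_total t (-δ) with h | h
  · exact integrableOn_zero.congr_fun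
      (fun v hv => (pstep_eq_zero hδ (le_trans hv h)).symm) measurableSet_Iic
  · rw [← Set.Iic_union_Ioc_eq_Iic h]
    apply IntegrableOn.union
    · exact integrableOn_zero.congr_fun
        (fun v hv => (pstep_eq_zero hδ hv).symm) measurableSet_Iic
    · apply Measure.integrableOn_of_bounded measure_Ioc_lt_top.ne
        (pstep_measurable δ).aestronglyMeasurable (M := 1)
      filter_upwards with v
      rw [Real.norm_eq_abs, abs_of_nonneg (pstep_nonneg hδ v)]
      exact pstep_le_one hδ v

lemma integral_pstep_Iic_zero {δ : ℝ} (hδ : 0 < δ) :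
    ∫ v in Set.Iic (0:ℝ), pstep δ v = δ / 4 := by
  have hle : -δ ≤ (0:ℝ) := by linarith
  rw [← Set.Iic_union_Ioc_eq_Iic hle,
    setIntegral_union (Set.Iic_disjoint_Ioc le_rfl) measurableSet_Ioc
      (integrableOn_zero.congr_fun (fun v hv => (pstep_eq_zero hδ hv).symm) measurableSet_Iic)
      (((pstep_integrableOn_Iic hδ 0).mono_set (Set.Ioc_subset_Iic_self)))]
  have h0 : ∫ v in Set.Iic (-δ), pstep δ v = 0 := by
    rw [setIntegral_congr_fun measurableSet_Iic (fun v hv => pstep_eq_zero hδ hv)]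
    simp
  have h1 : ∫ v in Set.Ioc (-δ) (0:ℝ), pstep δ v = ∫ v in (-δ)..0, pstep δ v := by
    rw [intervalIntegral.integral_of_le hle]
  have h2 : ∫ v in (-δ)..0, pstep δ v = ∫ v in (-δ)..0, (v / (2 * δ) + 1 / 2) := by
    apply intervalIntegral.integral_congr
    intro v hv
    rw [Set.uIcc_of_le hle] at hv
    unfold pstep
    rw [if_neg (not_lt.2 hv.1), if_pos (by linarith [hv.2])]
  have h3 : ∫ v in (-δ)..0, (v / (2 * δ) + 1 / 2) = δ / 4 := by
    rw [intervalIntegral.integral_add (intervalIntegral.intervalIntegrable_id.div_const _)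
      intervalIntegrable_const, intervalIntegral.integral_div, integral_id,
      intervalIntegral.integral_const]
    field_simp
    ring
  rw [h0, h1, h2, h3, zero_add]

lemma pstep_key {δ : ℝ} (hδ : 0 < δ) (t : ℝ) :
    (δ / 4) * Hstep t ≤ ∫ v in Set.Iic t, pstep δ v := by
  unfold Hstep
  split_ifs with ht
  · rw [mul_one, ← integral_pstep_Iic_zero hδ, ← Set.Iic_union_Ioc_eq_Iic ht,
      setIntegral_union (Set.Iic_disjoint_Ioc le_rfl) measurableSet_Ioc
        (pstep_integrableOn_Iic hδ 0)
        ((pstep_integrableOn_Iic hδ t).mono_set Set.Ioc_subset_Iic_self)]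
    have : 0 ≤ ∫ v in Set.Ioc (0:ℝ) t, pstep δ v :=
      setIntegral_nonneg measurableSet_Ioc (fun v _ => pstep_nonneg hδ v)
    linarith
  · rw [mul_zero]
    exact setIntegral_nonneg measurableSet_Iic (fun v _ => pstep_nonneg hδ v)

/-- `Q(x) = ∫_{-∞}^{x} f_δ ≥ (δ/4)·H(x)`, hence the surrogate loss dominates
`(δ/4)` times the AP-loss. -/
theorem stmt9 {ι : Type*} [DecidableEq ι] (δ : ℝ) (hδ : 0 < δ)
    (P N : Finset ι) (hPN : Disjoint P N) (hP : P.Nonempty) (hN : N.Nonempty)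
    (x : ι → ι → ℝ) :
    (∀ t : ℝ, (δ / 4) * Hstep t ≤ ∫ v in Set.Iic t, pstep δ v) ∧
    (δ / 4) * ((1 / (P.card : ℝ)) * ∑ i ∈ P,
        (∑ j ∈ N, Hstep (x i j)) /
          (1 + ∑ j ∈ (P ∪ N).erase i, Hstep (x i j)))
      ≤ (1 / (P.card : ℝ)) * ∑ i ∈ P,
          (∑ j ∈ N, ∫ v in Set.Iic (x i j), pstep δ v) /
            (1 + ∑ j ∈ (P ∪ N).erase i, Hstep (x i j)) := by
  refine ⟨pstep_key hδ, ?_⟩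
  have hc : (0:ℝ) ≤ 1 / (P.card : ℝ) := by positivity
  rw [mul_left_comm]
  apply mul_le_mul_of_nonneg_left ?_ hc
  rw [Finset.mul_sum]
  apply Finset.sum_le_sum
  intro i _
  have hD : (0:ℝ) < 1 + ∑ j ∈ (P ∪ N).erase i, Hstep (x i j) := by
    have : 0 ≤ ∑ j ∈ (P ∪ N).erase i, Hstep (x i j) :=
      Finset.sum_nonneg fun j _ => by unfold Hstep; split_ifs <;> norm_num
    linarith
  rw [mul_div_assoc']
  gcongr
  rw [Finset.mul_sum]
  exact Finset.sum_le_sum fun j _ => pstep_key hδ (x i j)
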